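/- Let A ⊆ {0,1}^{n_A} have asymmetric norm N_A with respect to its last coordinate and B ⊆ {0,1}^{n_B} have asymmetric norm N_B with respect to its first coordinate. Then the amalgamated direct sum A ⊕̇ B = {(a,0,b) : (a,0) ∈ A, (0,b) ∈ B} ∪ {(a,1,b) : (a,1) ∈ A, (1,b) ∈ B} has asymmetric norm N_A + N_B - 1 with respect to coordinate n_A. -/

import Mathlib

open Finset

abbrev Vec (n : ℕ) := Fin n → Bool

noncomputable def dS {n : ℕ} (x : Vec n) (Y : Set (Vec n)) : ℕ∞ :=
  ⨅ y ∈ Y, (hammingDist x y : ℕ∞)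

noncomputable def dA {n : ℕ} (x : Vec n) (Y : Set (Vec n)) : ℕ∞ :=
  ⨅ y ∈ {y ∈ Y | ∀ i, x i ≤ y i}, (hammingDist x y : ℕ∞)

def sec {n : ℕ} (C : Set (Vec n)) (i : Fin n) (b : Bool) : Set (Vec n) :=
  {c ∈ C | c i = b}

def NormAt {n : ℕ} (C : Set (Vec n)) (i : Fin n) (N : ℕ) : Prop :=
  ∀ x : Vec n, dS x (sec C i false) + dS x (sec C i true) ≤ (N : ℕ∞)

def AsymNormAt {n : ℕ} (C : Set (Vec n)) (i : Fin n) (N : ℕ) : Prop :=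
  ∀ x : Vec n,
    (x i = false → dA x (sec C i false) + dA x (sec C i true) ≤ (N : ℕ∞)) ∧
    (x i = true → 2 * dA x (sec C i true) + 1 ≤ (N : ℕ∞))

def ads {nA nB : ℕ} (A : Set (Vec (nA+1))) (B : Set (Vec (nB+1))) :
    Set (Vec (nA+1+nB)) :=
  {z | ∃ (a : Fin nA → Bool) (t : Bool) (b : Fin nB → Bool),
    Fin.snoc a t ∈ A ∧ Fin.cons t b ∈ B ∧ z = Fin.append (Fin.snoc a t) b}

def flipCoord {n : ℕ} (x : Vec n) (i : Fin n) : Vec n := Function.update x i (!x i)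

def PatchedAt {n : ℕ} (S T : Set (Vec n)) (i : Fin n) (N : ℕ) : Prop :=
  ∀ x : Vec n, (dS x (sec S i false) + dS x (sec S i true) ≤ (N : ℕ∞))
    ∨ (x ∈ T ∧ flipCoord x i ∈ T)

def AsymPatchedAt {n : ℕ} (S T : Set (Vec n)) (i : Fin n) (N : ℕ) : Prop :=
  ∀ x : Vec n,
    (x i = false → (dA x (sec S i false) + dA x (sec S i true) ≤ (N : ℕ∞))
       ∨ (x ∈ T ∧ flipCoord x i ∈ T)) ∧
    (x i = true → (2 * dA x (sec S i true) + 1 ≤ (N : ℕ∞)) ∨ x ∈ T)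

/-! Write `x = (u, v)` with `s = u (last nA)` the shared coordinate. The `t`-section of `A ⊕̇ B`
is the product of the `t`-section of `A` with `{b | (t, b) ∈ B}`, so for `s ≤ t` asymmetric
distances to it split as
`d⁺(x, (A ⊕̇ B)_t) + [s ≠ t] = d⁺(u, A_t) + d⁺((s, v), B_t)`:
a flip of the shared coordinate is counted once in `A ⊕̇ B` but in both `A` and `B`. Adding the two
sections (when `s = 0`) or doubling the `1`-section (when `s = 1`) gives one more than the left-hand
side of the norm condition for `A ⊕̇ B`, bounded by `N_A + N_B`. -/

theorem hammingDist_append {α : Type*} [DecidableEq α] {m k : ℕ} (u u' : Fin m → α)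
    (v v' : Fin k → α) :
    hammingDist (Fin.append u v) (Fin.append u' v') = hammingDist u u' + hammingDist v v' := by
  simp only [hammingDist, Finset.card_filter, Fin.sum_univ_add, Fin.append_left, Fin.append_right]

theorem hammingDist_cons {α : Type*} [DecidableEq α] {k : ℕ} (a b : α) (v w : Fin k → α) :
    hammingDist (Fin.cons a v : Fin (k + 1) → α) (Fin.cons b w) =
      (if a = b then 0 else 1) + hammingDist v w := by
  simp only [hammingDist, Finset.card_filter, Fin.sum_univ_succ, Fin.cons_zero, Fin.cons_succ,
    ite_not]

theorem Fin.append_le_append_iff {α : Type*} [Preorder α] {m k : ℕ} {u c : Fin m → α}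
    {v w : Fin k → α} : Fin.append u v ≤ Fin.append c w ↔ u ≤ c ∧ v ≤ w := by
  simp only [Pi.le_def, Fin.forall_fin_add, Fin.append_left, Fin.append_right]

theorem le_natCast_sub_one_of_add_one_le {a : ℕ∞} {m : ℕ} (h : a + 1 ≤ m) :
    a ≤ ((m - 1 : ℕ) : ℕ∞) := by
  lift a to ℕ using fun ha => by simp [ha] at h
  norm_cast at h ⊢
  omega

theorem dA_append_image2 {m k : ℕ} (u : Vec m) (v : Vec k) (S : Set (Vec m)) (W : Set (Vec k)) :
    dA (Fin.append u v) (Set.image2 Fin.append S W) = dA u S + dA v W := by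
  apply le_antisymm
  · refine ENat.le_iInf₂_add_iInf₂ fun c ⟨hc, huc⟩ w ⟨hw, hvw⟩ => ?_
    rw [← Nat.cast_add, ← hammingDist_append]
    exact iInf₂_le _ ⟨Set.mem_image2_of_mem hc hw, Fin.append_le_append_iff.2 ⟨huc, hvw⟩⟩
  · refine le_iInf₂ fun z ⟨⟨c, hc, w, hw, hz⟩, hle⟩ => ?_
    subst hz
    obtain ⟨huc, hvw⟩ := Fin.append_le_append_iff.1 hle
    rw [hammingDist_append, Nat.cast_add]
    exact add_le_add (iInf₂_le c ⟨hc, huc⟩) (iInf₂_le w ⟨hw, hvw⟩)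

theorem dA_cons_sec_zero {k : ℕ} {s t : Bool} (hst : s ≤ t) (v : Vec k) (B : Set (Vec (k + 1))) :
    dA (Fin.cons s v) (sec B 0 t) = (if s = t then 0 else 1) + dA v {b | Fin.cons t b ∈ B} := by
  apply le_antisymm
  · rw [dA, dA, ENat.add_iInf₂]
    refine le_iInf₂ fun b ⟨hb, hvb⟩ => ?_
    refine (iInf₂_le _ ⟨⟨hb, rfl⟩, Fin.cons_le_cons.2 ⟨hst, hvb⟩⟩).trans_eq ?_
    simp [hammingDist_cons]
  · refine le_iInf₂ fun d ⟨⟨hdB, hdt⟩, hle⟩ => ?_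
    rw [← Fin.cons_self_tail d, hdt] at hdB hle ⊢
    rw [hammingDist_cons]
    push_cast
    exact add_le_add le_rfl (iInf₂_le _ ⟨hdB, (Fin.cons_le_cons.1 hle).2⟩)

theorem sec_ads {nA nB : ℕ} (A : Set (Vec (nA + 1))) (B : Set (Vec (nB + 1))) (t : Bool) :
    sec (ads A B) (Fin.castAdd nB (Fin.last nA)) t =
      Set.image2 Fin.append (sec A (Fin.last nA) t) {b | Fin.cons t b ∈ B} := by
  ext z
  constructor
  · rintro ⟨⟨a, t', b, ha, hb, rfl⟩, hz⟩
    obtain rfl : t' = t := by simpa [Fin.append_left] using hz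
    exact ⟨_, ⟨ha, Fin.snoc_last _ _⟩, b, hb, rfl⟩
  · rintro ⟨c, ⟨hc, rfl⟩, b, hb, rfl⟩
    exact ⟨⟨Fin.init c, c (Fin.last nA), b, by rwa [Fin.snoc_init_self], hb,
      by rw [Fin.snoc_init_self]⟩, Fin.append_left _ _ _⟩

theorem dA_sec_ads_add {nA nB : ℕ} (A : Set (Vec (nA + 1))) (B : Set (Vec (nB + 1)))
    (u : Vec (nA + 1)) (v : Vec nB) {t : Bool} (ht : u (Fin.last nA) ≤ t) :
    dA (Fin.append u v) (sec (ads A B) (Fin.castAdd nB (Fin.last nA)) t)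
        + (if u (Fin.last nA) = t then 0 else 1) =
      dA u (sec A (Fin.last nA) t) + dA (Fin.cons (u (Fin.last nA)) v) (sec B 0 t) := by
  rw [sec_ads, dA_append_image2, dA_cons_sec_zero ht, add_left_comm, add_comm]

theorem ads_asym_norm (nA nB NA NB : ℕ)
    (A : Set (Vec (nA + 1))) (B : Set (Vec (nB + 1)))
    (hA : AsymNormAt A (Fin.last nA) NA) (hB : AsymNormAt B 0 NB) :
    AsymNormAt (ads A B) (Fin.castAdd nB (Fin.last nA)) (NA + NB - 1) := by
  intro x
  obtain ⟨u, v, rfl⟩ : ∃ u v, x = Fin.append u v := ⟨_, _, Fin.append_castAdd_natAdd.symm⟩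
  simp only [Fin.append_left]
  cases hu : u (Fin.last nA) with
  | false =>
    have hf := dA_sec_ads_add A B u v (t := false) hu.le
    have ht := dA_sec_ads_add A B u v (t := true) (Bool.le_true _)
    simp only [hu, ↓reduceIte, Bool.false_eq_true, add_zero] at hf ht
    refine ⟨fun _ => le_natCast_sub_one_of_add_one_le ?_, by simp⟩
    calc _ = (dA u (sec A (Fin.last nA) false) + dA u (sec A (Fin.last nA) true))
          + (dA (Fin.cons false v) (sec B 0 false) + dA (Fin.cons false v) (sec B 0 true)) := by
          rw [add_assoc, ht, hf]; ring
      _ ≤ NA + NB := add_le_add ((hA u).1 hu) ((hB _).1 rfl)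
      _ = _ := (Nat.cast_add NA NB).symm
  | true =>
    have ht := dA_sec_ads_add A B u v (t := true) (Bool.le_true _)
    simp only [hu, ↓reduceIte, add_zero] at ht
    refine ⟨by simp, fun _ => le_natCast_sub_one_of_add_one_le ?_⟩
    calc _ = (2 * dA u (sec A (Fin.last nA) true) + 1)
          + (2 * dA (Fin.cons true v) (sec B 0 true) + 1) := by
          rw [ht]; ring
      _ ≤ NA + NB := add_le_add ((hA u).2 hu) ((hB _).2 rfl)
      _ = _ := (Nat.cast_add NA NB).symm
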